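/- PRT ⊊ PRT[O] ⊆ PRT[T,O] and PRT ⊊ PRT[T] ⊆ PRT[T,O], where PRT, PRT[O], PRT[T], PRT[T,O] denote respectively the classes of PRT-learnable, PRT-learnable-with-oracle, PRT-learnable-with-teacher, and PRT-learnable-with-teacher-and-oracle indexed families. In particular the family 𝓗₂ of all three-element multisets coded by a fixed polynomial-time triple-coding (H_n = content of the decoded triple (n)₃) is PRT[O]-learnable and PRT[T]-learnable but not PRT-learnable. -/

import Mathlib

/-!
Common framework: indexed families of c.e. sets, enumerations (texts),
learning machines with run-time, membership-oracle machines, teachers,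
and the learning criteria PRT/PSD/PMC/PCS with oracle/teacher variants.
-/

namespace TeachLearn

attribute [local instance] Classical.propDecidable

/-- The initial segment (finite string) of length `n` of the infinite sequence `f`. -/
def str (f : ℕ → ℕ) (n : ℕ) : List ℕ := (List.range n).map f

/-- `f` is an enumeration (a text) of the set `A`: its set of values is exactly `A`. -/
def IsEnum (f : ℕ → ℕ) (A : Set ℕ) : Prop := Set.range f = A

/-- An indexed family: a uniformly computably enumerable sequence of nonempty
subsets of `ℕ`. -/
structure IndexedFamily where
  F : ℕ → Set ℕ
  nonempty : ∀ n, (F n).Nonempty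
  uce : REPred fun p : ℕ × ℕ => p.1 ∈ F p.2

namespace IndexedFamily

/-- `A` is a member of the indexed family `𝓕`. -/
def Mem (𝓕 : IndexedFamily) (A : Set ℕ) : Prop := ∃ n, 𝓕.F n = A

/-- The minimal index of `A` in the indexed family `𝓕`. -/
noncomputable def mi (𝓕 : IndexedFamily) (A : Set ℕ) : ℕ := sInf {n | 𝓕.F n = A}

end IndexedFamily

/-- A learning machine: a partial computable map from finite strings to
hypotheses, together with a (cumulative) run-time function.  The run-time is
defined exactly when the machine halts, dominates the length of the input read
as well as the size of the output produced, and is monotone along prefixes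
(time is accumulated while reading an enumeration). -/
structure Machine where
  eval : List ℕ →. ℕ
  partrec : Partrec eval
  time : List ℕ →. ℕ
  time_dom : ∀ σ, (time σ).Dom ↔ (eval σ).Dom
  length_le_time : ∀ ⦃σ t⦄, t ∈ time σ → σ.length ≤ t
  size_le_time : ∀ ⦃σ t h⦄, t ∈ time σ → h ∈ eval σ → Nat.size h ≤ t
  time_mono : ∀ ⦃σ τ s t⦄, σ <+: τ → s ∈ time σ → t ∈ time τ → s ≤ t

/-- A teacher: a computable, prefix-monotone map on finite strings whose
output consists of elements of its input. -/
structure Teacher where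
  t : List ℕ → List ℕ
  computable : Computable t
  mono : ∀ ⦃σ τ⦄, σ <+: τ → t σ <+: t τ
  content_sub : ∀ ⦃σ x⦄, x ∈ t σ → x ∈ σ

/-- A learning machine with access to a membership oracle, modeled
interactively: `step (σ, ans)` is the machine's action on input string `σ`
after having received the list `ans` of oracle answers so far; an even value
`2 * q` asks the oracle whether `q` belongs to the target, while an odd value
`2 * h + 1` halts the interaction with hypothesis `h`.  The run-time dominates
the length of the input read, the number of oracle queries asked, and the size
of the value produced, and is monotone (cumulative). -/
structure OMachine where
  step : List ℕ × List Bool →. ℕ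
  partrec : Partrec step
  time : List ℕ × List Bool →. ℕ
  time_dom : ∀ x, (time x).Dom ↔ (step x).Dom
  length_le_time : ∀ ⦃x t⦄, t ∈ time x → x.1.length ≤ t
  queries_le_time : ∀ ⦃x t⦄, t ∈ time x → x.2.length ≤ t
  size_le_time : ∀ ⦃x t v⦄, t ∈ time x → v ∈ step x → Nat.size v ≤ t
  time_mono : ∀ ⦃σ τ a b s t⦄, σ <+: τ → a <+: b →
    s ∈ time (σ, a) → t ∈ time (τ, b) → s ≤ t

namespace OMachine

/-- The answer lists reachable in the interaction of the machine `M` with the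
membership oracle for `A` on the input string `σ`. -/
inductive Reach (M : OMachine) (A : Set ℕ) (σ : List ℕ) : List Bool → Prop
  | nil : Reach M A σ []
  | query {ans q} : Reach M A σ ans → (2 * q) ∈ M.step (σ, ans) →
      Reach M A σ (ans ++ [decide (q ∈ A)])

/-- `M.Out A σ h ans`: on input `σ`, interacting with the membership oracle
for `A`, the machine `M` receives the oracle answers `ans` and halts with
hypothesis `h`. -/
def Out (M : OMachine) (A : Set ℕ) (σ : List ℕ) (h : ℕ) (ans : List Bool) : Prop :=
  M.Reach A σ ans ∧ (2 * h + 1) ∈ M.step (σ, ans)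

/-- With oracle `A`, on the stage inputs `I`, the machine `M` outputs the
hypothesis `h` from stage `n` onwards. -/
def Settles (M : OMachine) (A : Set ℕ) (I : ℕ → List ℕ) (h n : ℕ) : Prop :=
  ∀ m, n ≤ m → ∃ ans, M.Out A (I m) h ans

end OMachine

/-- A teacher for the teacher-and-oracle model: it additionally has access to
the oracle answers received so far by the learner. -/
structure OTeacher where
  t : List ℕ → List Bool → List ℕ
  computable : Computable₂ t
  mono : ∀ ⦃σ τ a b⦄, σ <+: τ → a <+: b → t σ a <+: t τ b
  content_sub : ∀ ⦃σ a x⦄, x ∈ t σ a → x ∈ σ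

/-- On the stage inputs `I`, the machine `M` outputs the hypothesis `h` from
stage `n` onwards. -/
def Machine.Settles (M : Machine) (I : ℕ → List ℕ) (h n : ℕ) : Prop :=
  ∀ m, n ≤ m → M.eval (I m) = Part.some h

/-- Settling for the teacher-and-oracle model: `hist m` records the oracle
answers the learner received at stage `m - 1`, which the teacher sees at
stage `m`.  From stage `n` on, the learner outputs `h`. -/
def OMachine.TOSettles (M : OMachine) (T : OTeacher) (A : Set ℕ) (f : ℕ → ℕ)
    (hist : ℕ → List Bool) (h n : ℕ) : Prop :=
  ∀ m, n ≤ m → M.Out A (T.t (str f m) (hist m)) h (hist (m + 1))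

/-! ### Polynomial run-time (PRT) -/

/-- `M` converges to the hypothesis `h` on the stage inputs `I` within fewer
than `B` computation steps. -/
def Machine.PRTIdentifies (M : Machine) (I : ℕ → List ℕ) (h B : ℕ) : Prop :=
  ∃ n, M.Settles I h n ∧ ∃ t, t ∈ M.time (I n) ∧ t < B

/-- Oracle version of `Machine.PRTIdentifies`; the run-time bound also bounds
the oracle use (by `queries_le_time`). -/
def OMachine.PRTIdentifies (M : OMachine) (A : Set ℕ) (I : ℕ → List ℕ) (h B : ℕ) : Prop :=
  ∃ n, M.Settles A I h n ∧
    ∃ ans t, M.Out A (I n) h ans ∧ t ∈ M.time (I n, ans) ∧ t < B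

/-- `M` PRT-learns `𝓕` with polynomial bound `p`. -/
def PRTLearnsWith (M : Machine) (p : Polynomial ℕ) (𝓕 : IndexedFamily) : Prop :=
  ∀ A, 𝓕.Mem A → ∀ f, IsEnum f A →
    ∃ h, 𝓕.F h = A ∧ M.PRTIdentifies (str f) h (p.eval (𝓕.mi A))

/-- `𝓕` is PRT-learnable. -/
def PRT (𝓕 : IndexedFamily) : Prop := ∃ M p, PRTLearnsWith M p 𝓕

/-- The learner-teacher pair `(M, T)` PRT-learns `𝓕` with polynomial bound `p`. -/
def PRTTLearnsWith (M : Machine) (T : Teacher) (p : Polynomial ℕ) (𝓕 : IndexedFamily) : Prop :=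
  ∀ A, 𝓕.Mem A → ∀ f, IsEnum f A →
    ∃ h, 𝓕.F h = A ∧ M.PRTIdentifies (fun m => T.t (str f m)) h (p.eval (𝓕.mi A))

/-- `𝓕` is PRT[T]-learnable. -/
def PRTT (𝓕 : IndexedFamily) : Prop := ∃ M T p, PRTTLearnsWith M T p 𝓕

/-- `𝓕` is PRT[O]-learnable. -/
def PRTO (𝓕 : IndexedFamily) : Prop :=
  ∃ (M : OMachine) (p : Polynomial ℕ), ∀ A, 𝓕.Mem A → ∀ f, IsEnum f A →
    ∃ h, 𝓕.F h = A ∧ M.PRTIdentifies A (str f) h (p.eval (𝓕.mi A))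

/-- `𝓕` is PRT[T,O]-learnable. -/
def PRTTO (𝓕 : IndexedFamily) : Prop :=
  ∃ (M : OMachine) (T : OTeacher) (p : Polynomial ℕ),
    ∀ A, 𝓕.Mem A → ∀ f, IsEnum f A →
      ∃ h, 𝓕.F h = A ∧ ∃ hist : ℕ → List Bool, hist 0 = [] ∧
        ∃ n, M.TOSettles T A f hist h n ∧
          ∃ t, t ∈ M.time (T.t (str f n) (hist n), hist (n + 1)) ∧ t < p.eval (𝓕.mi A)

/-! ### Polynomial size dataset (PSD) -/

/-- `M` converges to `h` on an initial stage whose input contains fewer than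
`B` distinct elements. -/
def Machine.PSDIdentifies (M : Machine) (I : ℕ → List ℕ) (h B : ℕ) : Prop :=
  ∃ n, M.Settles I h n ∧ (I n).toFinset.card < B

/-- Oracle version of `Machine.PSDIdentifies`; the oracle use is also bounded. -/
def OMachine.PSDIdentifies (M : OMachine) (A : Set ℕ) (I : ℕ → List ℕ) (h B : ℕ) : Prop :=
  ∃ n, M.Settles A I h n ∧ (I n).toFinset.card < B ∧
    ∃ ans, M.Out A (I n) h ans ∧ ans.length ≤ B

/-- `𝓕` is PSD-learnable. -/
def PSD (𝓕 : IndexedFamily) : Prop :=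
  ∃ (M : Machine) (p : Polynomial ℕ), ∀ A, 𝓕.Mem A → ∀ f, IsEnum f A →
    ∃ h, 𝓕.F h = A ∧ M.PSDIdentifies (str f) h (p.eval (𝓕.mi A))

/-- `𝓕` is PSD[T]-learnable. -/
def PSDT (𝓕 : IndexedFamily) : Prop :=
  ∃ (M : Machine) (T : Teacher) (p : Polynomial ℕ), ∀ A, 𝓕.Mem A → ∀ f, IsEnum f A →
    ∃ h, 𝓕.F h = A ∧ M.PSDIdentifies (fun m => T.t (str f m)) h (p.eval (𝓕.mi A))

/-- `𝓕` is PSD[O]-learnable. -/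
def PSDO (𝓕 : IndexedFamily) : Prop :=
  ∃ (M : OMachine) (p : Polynomial ℕ), ∀ A, 𝓕.Mem A → ∀ f, IsEnum f A →
    ∃ h, 𝓕.F h = A ∧ M.PSDIdentifies A (str f) h (p.eval (𝓕.mi A))

/-- `𝓕` is PSD[T,O]-learnable. -/
def PSDTO (𝓕 : IndexedFamily) : Prop :=
  ∃ (M : OMachine) (T : OTeacher) (p : Polynomial ℕ),
    ∀ A, 𝓕.Mem A → ∀ f, IsEnum f A →
      ∃ h, 𝓕.F h = A ∧ ∃ hist : ℕ → List Bool, hist 0 = [] ∧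
        ∃ n, M.TOSettles T A f hist h n ∧
          (T.t (str f n) (hist n)).toFinset.card < p.eval (𝓕.mi A) ∧
          (hist (n + 1)).length ≤ p.eval (𝓕.mi A)

/-! ### Polynomial mind-changes (PMC) -/

/-- The set of positions at which the hypothesis stream `g` changes its mind. -/
def MindChanges (g : ℕ → ℕ) : Set ℕ := {i | g i ≠ g (i + 1)}

/-- The hypothesis stream `g` changes its mind at most `B` times, and the only
hypothesis appearing infinitely often in it is an index of `A` in `𝓕`. -/
def PMCCriterion (𝓕 : IndexedFamily) (A : Set ℕ) (g : ℕ → ℕ) (B : ℕ) : Prop :=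
  (MindChanges g).Finite ∧ (MindChanges g).ncard ≤ B ∧
    ∀ h, {i | g i = h}.Infinite → 𝓕.F h = A

/-- `𝓕` is PMC-learnable. -/
def PMC (𝓕 : IndexedFamily) : Prop :=
  ∃ (M : Machine) (p : Polynomial ℕ), ∀ A, 𝓕.Mem A → ∀ f, IsEnum f A →
    ∃ g : ℕ → ℕ, (∀ m, M.eval (str f m) = Part.some (g m)) ∧
      PMCCriterion 𝓕 A g (p.eval (𝓕.mi A))

/-- `𝓕` is PMC[T]-learnable. -/
def PMCT (𝓕 : IndexedFamily) : Prop :=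
  ∃ (M : Machine) (T : Teacher) (p : Polynomial ℕ), ∀ A, 𝓕.Mem A → ∀ f, IsEnum f A →
    ∃ g : ℕ → ℕ, (∀ m, M.eval (T.t (str f m)) = Part.some (g m)) ∧
      PMCCriterion 𝓕 A g (p.eval (𝓕.mi A))

/-- `𝓕` is PMC[O]-learnable. -/
def PMCO (𝓕 : IndexedFamily) : Prop :=
  ∃ (M : OMachine) (p : Polynomial ℕ), ∀ A, 𝓕.Mem A → ∀ f, IsEnum f A →
    ∃ g : ℕ → ℕ,
      (∀ m, ∃ ans, M.Out A (str f m) (g m) ans ∧ ans.length ≤ p.eval (𝓕.mi A)) ∧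
      PMCCriterion 𝓕 A g (p.eval (𝓕.mi A))

/-- `𝓕` is PMC[T,O]-learnable. -/
def PMCTO (𝓕 : IndexedFamily) : Prop :=
  ∃ (M : OMachine) (T : OTeacher) (p : Polynomial ℕ),
    ∀ A, 𝓕.Mem A → ∀ f, IsEnum f A →
      ∃ hist : ℕ → List Bool, hist 0 = [] ∧
        ∃ g : ℕ → ℕ,
          (∀ m, M.Out A (T.t (str f m) (hist m)) (g m) (hist (m + 1)) ∧
            (hist (m + 1)).length ≤ p.eval (𝓕.mi A)) ∧
          PMCCriterion 𝓕 A g (p.eval (𝓕.mi A))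

/-! ### Polynomial size characteristic sample (PCS) -/

/-- `𝓕` is PCS-learnable: there are a machine, a polynomial bound and an
assignment of a characteristic sample to each member of `𝓕`. -/
def PCS (𝓕 : IndexedFamily) : Prop :=
  ∃ (M : Machine) (p : Polynomial ℕ) (S : Set ℕ → Finset ℕ),
    ∀ A, 𝓕.Mem A → ↑(S A) ⊆ A ∧ (S A).card < p.eval (𝓕.mi A) ∧
      ∃ e, 𝓕.F e = A ∧ ∀ f, IsEnum f A → ∀ n, (∀ x ∈ S A, x ∈ str f n) →
        M.eval (str f n) = Part.some e

/-- `𝓕` is PCS[O]-learnable. -/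
def PCSO (𝓕 : IndexedFamily) : Prop :=
  ∃ (M : OMachine) (p : Polynomial ℕ) (S : Set ℕ → Finset ℕ),
    ∀ A, 𝓕.Mem A → ↑(S A) ⊆ A ∧ (S A).card < p.eval (𝓕.mi A) ∧
      ∃ e, 𝓕.F e = A ∧ ∀ f, IsEnum f A → ∀ n, (∀ x ∈ S A, x ∈ str f n) →
        ∃ ans, M.Out A (str f n) e ans ∧ ans.length ≤ p.eval (𝓕.mi A)

/-- `𝓕` is PCS[T]-learnable: the characteristic sample must eventually appear
in the teacher's output stream, after which the learner locks onto a correct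
index. -/
def PCST (𝓕 : IndexedFamily) : Prop :=
  ∃ (M : Machine) (T : Teacher) (p : Polynomial ℕ) (S : Set ℕ → Finset ℕ),
    ∀ A, 𝓕.Mem A → ↑(S A) ⊆ A ∧ (S A).card < p.eval (𝓕.mi A) ∧
      ∃ e, 𝓕.F e = A ∧ ∀ f, IsEnum f A →
        (∃ n, ∀ x ∈ S A, x ∈ T.t (str f n)) ∧
        ∀ n, (∀ x ∈ S A, x ∈ T.t (str f n)) → M.eval (T.t (str f n)) = Part.some e

/-- `𝓕` is PCS[T,O]-learnable. -/
def PCSTO (𝓕 : IndexedFamily) : Prop :=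
  ∃ (M : OMachine) (T : OTeacher) (p : Polynomial ℕ) (S : Set ℕ → Finset ℕ),
    ∀ A, 𝓕.Mem A → ↑(S A) ⊆ A ∧ (S A).card < p.eval (𝓕.mi A) ∧
      ∃ e, 𝓕.F e = A ∧ ∀ f, IsEnum f A →
        ∃ hist : ℕ → List Bool, hist 0 = [] ∧
          (∃ n, ∀ x ∈ S A, x ∈ T.t (str f n) (hist n)) ∧
          ∀ n, (∀ x ∈ S A, x ∈ T.t (str f n) (hist n)) →
            M.Out A (T.t (str f n) (hist n)) e (hist (n + 1)) ∧
            (hist (n + 1)).length ≤ p.eval (𝓕.mi A)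


/-- The three-element (multi)set coded by `n` under the fixed polynomial-time
triple coding: `H_n` is the content of the decoded triple `(n)₃`. -/
def tripleSet (n : ℕ) : Set ℕ :=
  {(Nat.unpair n).1, (Nat.unpair (Nat.unpair n).2).1, (Nat.unpair (Nat.unpair n).2).2}

/-!
A PRT-learner reads at least one datum per computation step, so on every text of `B` it has
converged by a stage bounded in terms of `mi B` alone. Fed a text of a proper subset `A ⊂ B`
for longer than that bound and then the rest of `B`, it must conjecture for `B` the index it
had settled on for `A`; in `𝓗₂` the sets `{0} ⊂ {0, 1}` form such a pair.

Every element of the triple coded by `m` is at most `m`. With a membership oracle the learner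
asks about `0, …, |σ|` and, once `|σ| ≥ m`, outputs a canonical code of the positive answers.
With a teacher that passes on first occurrences only, the learner sees a duplicate-free list of
the (at most three) elements and codes it directly. Both run in time polynomial in `m`. The
inclusions are simulations: an ordinary learner is an oracle learner that never queries, and
the identity is a teacher.
-/

lemma str_length (f : ℕ → ℕ) (n : ℕ) : (str f n).length = n := by simp [str]

lemma mem_str {f : ℕ → ℕ} {x n : ℕ} : x ∈ str f n ↔ ∃ i < n, f i = x := by simp [str]

lemma str_add (f : ℕ → ℕ) (m k : ℕ) :
    str f (m + k) = str f m ++ (List.range k).map fun i => f (m + i) := by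
  simp [str, List.range_add, Function.comp_def]

lemma str_congr {f g : ℕ → ℕ} {n : ℕ} (h : ∀ i < n, f i = g i) : str f n = str g n :=
  List.map_congr_left fun i hi => h i (List.mem_range.1 hi)

namespace IsEnum

variable {f : ℕ → ℕ} {A : Set ℕ}

lemma mem (hf : IsEnum f A) (i : ℕ) : f i ∈ A := hf ▸ ⟨i, rfl⟩

lemma exists_eq (hf : IsEnum f A) {x : ℕ} (hx : x ∈ A) : ∃ i, f i = x := by
  rw [← hf] at hx
  exact hx

lemma exists_subset_str (hf : IsEnum f A) (hA : A.Finite) : ∃ n, ∀ x ∈ A, x ∈ str f n := by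
  choose! i hi using fun x (hx : x ∈ A) => hf.exists_eq hx
  obtain ⟨N, hN⟩ := (hA.image i).bddAbove
  exact ⟨N + 1, fun x hx => mem_str.2 ⟨i x, Nat.lt_succ_of_le (hN ⟨x, hx, rfl⟩), hi x hx⟩⟩

lemma splice {g : ℕ → ℕ} {B : Set ℕ} (hf : IsEnum f A) (hg : IsEnum g B)
    (hAB : A ⊆ B) (N : ℕ) : IsEnum (fun i => if i < N then f i else g (i - N)) B := by
  refine Set.Subset.antisymm ?_ fun x hx => ?_
  · rintro _ ⟨i, rfl⟩
    dsimp only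
    split
    · exact hAB (hf.mem i)
    · exact hg.mem _
  · obtain ⟨j, rfl⟩ := hg.exists_eq hx
    exact ⟨N + j, by simp⟩

end IsEnum

lemma exists_isEnum {A : Set ℕ} (hA : A.Nonempty) : ∃ f, IsEnum f A := by
  obtain ⟨f, hf⟩ := A.to_countable.exists_eq_range hA
  exact ⟨f, hf.symm⟩

lemma IndexedFamily.F_mi {𝓕 : IndexedFamily} {A : Set ℕ} (hA : 𝓕.Mem A) : 𝓕.F (𝓕.mi A) = A :=
  Nat.sInf_mem hA

lemma IndexedFamily.Mem.nonempty {𝓕 : IndexedFamily} {A : Set ℕ} (hA : 𝓕.Mem A) : A.Nonempty := by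
  obtain ⟨n, rfl⟩ := hA
  exact 𝓕.nonempty n

lemma size_two_mul_add_one_le (n : ℕ) : Nat.size (2 * n + 1) ≤ Nat.size n + 1 := by
  have h := Nat.size_bit (b := true) (n := n) (by simp [Nat.bit])
  simp only [Nat.bit, cond_true] at h
  omega

def Machine.toOMachine (M : Machine) : OMachine where
  step x := (M.eval x.1).map fun h => 2 * h + 1
  partrec := (M.partrec.comp Computable.fst).map
    ((Primrec.succ.comp (Primrec.nat_mul.comp (Primrec.const 2) Primrec.snd)).to_comp.to₂)
  time x := (M.time x.1).map (· + x.2.length + 1)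
  time_dom x := by simpa using M.time_dom x.1
  length_le_time x t ht := by
    obtain ⟨s, hs, rfl⟩ := (Part.mem_map_iff _).1 ht
    have := M.length_le_time hs
    omega
  queries_le_time x t ht := by
    obtain ⟨s, -, rfl⟩ := (Part.mem_map_iff _).1 ht
    omega
  size_le_time x t v ht hv := by
    obtain ⟨s, hs, rfl⟩ := (Part.mem_map_iff _).1 ht
    obtain ⟨h, hh, rfl⟩ := (Part.mem_map_iff _).1 hv
    have := M.size_le_time hs hh
    have := size_two_mul_add_one_le h
    omega
  time_mono σ τ a b _ _ hστ hab hs ht := by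
    obtain ⟨s, hs', rfl⟩ := (Part.mem_map_iff _).1 hs
    obtain ⟨t, ht', rfl⟩ := (Part.mem_map_iff _).1 ht
    have := M.time_mono hστ hs' ht'
    have : a.length ≤ b.length := hab.length_le
    dsimp only
    omega

lemma Machine.toOMachine_out {M : Machine} {σ : List ℕ} {h : ℕ} (hh : M.eval σ = Part.some h)
    (A : Set ℕ) : M.toOMachine.Out A σ h [] :=
  ⟨.nil, Part.mem_map _ (hh ▸ Part.mem_some h)⟩

lemma Machine.toOMachine_time {M : Machine} {σ : List ℕ} {t : ℕ} (ht : t ∈ M.time σ) :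
    t + 1 ∈ M.toOMachine.time (σ, []) :=
  Part.mem_map _ ht

def Teacher.id : Teacher where
  t := _root_.id
  computable := Computable.id
  mono _ _ h := h
  content_sub _ _ h := h

def Teacher.toOTeacher (T : Teacher) : OTeacher where
  t σ _ := T.t σ
  computable := T.computable.comp Computable.fst
  mono _ _ _ _ h _ := T.mono h
  content_sub _ _ _ h := T.content_sub h

lemma prtt_of_prt {𝓕 : IndexedFamily} : PRT 𝓕 → PRTT 𝓕
  | ⟨M, p, hM⟩ => ⟨M, Teacher.id, p, hM⟩

lemma Machine.PRTIdentifies.toOMachine {M : Machine} {I : ℕ → List ℕ} {h B : ℕ}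
    (hM : M.PRTIdentifies I h B) (A : Set ℕ) : M.toOMachine.PRTIdentifies A I h (B + 1) := by
  obtain ⟨n, hset, t, ht, htB⟩ := hM
  exact ⟨n, fun m hm => ⟨[], M.toOMachine_out (hset m hm) A⟩,
    [], t + 1, M.toOMachine_out (hset n le_rfl) A,
    Machine.toOMachine_time ht, by omega⟩

lemma prto_of_prt {𝓕 : IndexedFamily} : PRT 𝓕 → PRTO 𝓕 := by
  rintro ⟨M, p, hM⟩
  refine ⟨M.toOMachine, p + 1, fun A hA f hf => ?_⟩
  obtain ⟨h, hFh, hid⟩ := hM A hA f hf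
  exact ⟨h, hFh, by simpa using hid.toOMachine A⟩

lemma prtto_of_prtt {𝓕 : IndexedFamily} : PRTT 𝓕 → PRTTO 𝓕 := by
  rintro ⟨M, T, p, hM⟩
  refine ⟨M.toOMachine, T.toOTeacher, p + 1, fun A hA f hf => ?_⟩
  obtain ⟨h, hFh, n, hset, t, ht, htB⟩ := hM A hA f hf
  refine ⟨h, hFh, fun _ => [], rfl, n, fun m hm => ?_, t + 1, M.toOMachine_time ht, ?_⟩
  · exact M.toOMachine_out (hset m hm) A
  · simpa using htB

lemma OMachine.PRTIdentifies.exists_answers {M : OMachine} {A : Set ℕ} {I : ℕ → List ℕ}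
    {h B : ℕ} (hM : M.PRTIdentifies A I h B) :
    ∃ n, ∃ ans : ℕ → List Bool, (∀ m, n ≤ m → M.Out A (I m) h (ans m)) ∧
      ∃ t, t ∈ M.time (I n, ans n) ∧ t < B := by
  obtain ⟨n, hset, ans₀, t, hout, ht, htB⟩ := hM
  choose! ans hans using hset
  refine ⟨n, Function.update ans n ans₀, fun m hm => ?_, t, by simpa using ht, htB⟩
  rcases eq_or_ne m n with rfl | hmn
  · simpa using hout
  · simpa [hmn] using hans m hm

def OTeacher.id : OTeacher where
  t σ _ := σ
  computable := Computable.fst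
  mono _ _ _ _ h _ := h
  content_sub _ _ _ h := h

lemma prtto_of_prto {𝓕 : IndexedFamily} : PRTO 𝓕 → PRTTO 𝓕 := by
  rintro ⟨M, p, hM⟩
  refine ⟨M, OTeacher.id, p, fun A hA f hf => ?_⟩
  obtain ⟨h, hFh, hid⟩ := hM A hA f hf
  obtain ⟨n, ans, hout, t, ht, htB⟩ := hid.exists_answers
  exact ⟨h, hFh, fun | 0 => [] | m + 1 => ans m, rfl, n, hout, t, ht, htB⟩

lemma Machine.PRTIdentifies.exists_settles_lt {M : Machine} {f : ℕ → ℕ} {h B : ℕ}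
    (hM : M.PRTIdentifies (str f) h B) : ∃ n < B, M.Settles (str f) h n := by
  obtain ⟨n, hset, t, ht, htB⟩ := hM
  have := M.length_le_time ht
  rw [str_length] at this
  exact ⟨n, by omega, hset⟩

lemma Machine.Settles.eq_of_agree {M : Machine} {f g : ℕ → ℕ} {h h' n n' : ℕ}
    (hf : M.Settles (str f) h n) (hg : M.Settles (str g) h' n')
    (hfg : ∀ i < max n n', f i = g i) : h = h' := by
  have := hf _ (le_max_left n n')
  rw [str_congr hfg, hg _ (le_max_right n n')] at this
  exact Part.some_injective this.symm

theorem not_prt_of_ssubset {𝓕 : IndexedFamily} {A B : Set ℕ} (hA : 𝓕.Mem A) (hB : 𝓕.Mem B)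
    (hAB : A ⊂ B) : ¬ PRT 𝓕 := by
  rintro ⟨M, p, hM⟩
  obtain ⟨f, hf⟩ := exists_isEnum hA.nonempty
  obtain ⟨g, hg⟩ := exists_isEnum hB.nonempty
  obtain ⟨hA', hFA, n, hsetA, -⟩ := hM A hA f hf
  set N := n + p.eval (𝓕.mi B)
  obtain ⟨hB', hFB, hidB⟩ := hM B hB _ (hf.splice hg hAB.subset N)
  obtain ⟨n', hn', hsetB⟩ := hidB.exists_settles_lt
  have hsame : hA' = hB' := hsetA.eq_of_agree hsetB fun i hi => (if_pos (by omega)).symm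
  exact hAB.ne (hFA ▸ hFB ▸ congrArg 𝓕.F hsame)

lemma le_of_mem_tripleSet {n x : ℕ} (hx : x ∈ tripleSet n) : x ≤ n := by
  rcases hx with rfl | rfl | rfl
  · exact Nat.unpair_left_le n
  · exact (Nat.unpair_left_le _).trans (Nat.unpair_right_le n)
  · exact (Nat.unpair_right_le _).trans (Nat.unpair_right_le n)

lemma length_le_three_of_nodup {n : ℕ} {l : List ℕ} (hl : l.Nodup)
    (hsub : ∀ x ∈ l, x ∈ tripleSet n) : l.length ≤ 3 := by
  rw [← List.toFinset_card_of_nodup hl]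
  refine (Finset.card_le_card (t := {(Nat.unpair n).1, (Nat.unpair (Nat.unpair n).2).1,
    (Nat.unpair (Nat.unpair n).2).2}) fun x hx => ?_).trans Finset.card_le_three
  rcases hsub x (List.mem_toFinset.1 hx) with rfl | rfl | rfl <;> simp

lemma tripleSet_finite (n : ℕ) : (tripleSet n).Finite :=
  ((Set.finite_singleton _).insert _).insert _

/-- The code of the triple obtained from a list of one to three elements by repeating its
last element. -/
def padCode (l : List ℕ) : ℕ :=
  Nat.pair (l.getD 0 0) (Nat.pair (l.getD 1 (l.getD 0 0)) (l.getD 2 (l.getD 1 (l.getD 0 0))))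

lemma tripleSet_padCode {l : List ℕ} (h₀ : l ≠ []) (h₃ : l.length ≤ 3) :
    tripleSet (padCode l) = {x | x ∈ l} := by
  match l, h₀ with
  | [a], _ | [a, b], _ | [a, b, c], _ => ext x; simp [padCode, tripleSet]
  | _ :: _ :: _ :: _ :: _, _ => simp only [List.length_cons] at h₃; omega

lemma tripleSet_padCode_of_nodup {n : ℕ} {l : List ℕ} (hl : l.Nodup)
    (hmem : ∀ x, x ∈ l ↔ x ∈ tripleSet n) : tripleSet (padCode l) = tripleSet n := by
  have h₀ : l ≠ [] := List.ne_nil_of_mem ((hmem _).2 (Or.inl rfl))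
  rw [tripleSet_padCode h₀ (length_le_three_of_nodup hl fun x => (hmem x).1)]
  exact Set.ext hmem

lemma getD_le {l : List ℕ} {m d : ℕ} (hl : ∀ x ∈ l, x ≤ m) (hd : d ≤ m) (i : ℕ) :
    l.getD i d ≤ m := by
  rw [List.getD_eq_getElem?_getD]
  cases h : l[i]? with
  | none => exact hd
  | some x => exact hl x (List.mem_of_getElem? h)

lemma pair_lt_sq {a b m : ℕ} (ha : a < m) (hb : b < m) : Nat.pair a b < m ^ 2 :=
  (Nat.pair_lt_max_add_one_sq a b).trans_le (Nat.pow_le_pow_left (by omega) 2)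

lemma padCode_lt {l : List ℕ} {m : ℕ} (hl : ∀ x ∈ l, x ≤ m) : padCode l < (m + 1) ^ 4 := by
  have ha := getD_le hl m.zero_le 0
  have hb := getD_le hl ha 1
  have hc := getD_le hl hb 2
  have hsq : m + 1 ≤ (m + 1) ^ 2 := Nat.le_self_pow (by norm_num) _
  rw [show 4 = 2 * 2 from rfl, pow_mul]
  exact pair_lt_sq (by omega) (pair_lt_sq (by omega) (by omega))

lemma primrec_padCode : Primrec padCode := by
  have getD : ∀ i, Primrec₂ fun (l : List ℕ) (d : ℕ) => l.getD i d := fun i =>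
    (Primrec.option_getD.comp (Primrec.list_getElem?.comp Primrec.fst (Primrec.const i))
      Primrec.snd).to₂.of_eq fun l d => List.getD_eq_getElem?_getD.symm
  have ha := (getD 0).comp .id (Primrec.const 0)
  have hb := (getD 1).comp .id ha
  have hc := (getD 2).comp .id hb
  exact Primrec₂.natPair.comp ha (Primrec₂.natPair.comp hb hc)

def tripleFamily : IndexedFamily where
  F := tripleSet
  nonempty _ := ⟨_, Or.inl rfl⟩
  uce := by
    have hl : Primrec fun n => (Nat.unpair n).1 := Primrec.fst.comp Primrec.unpair
    have hr : Primrec fun n => (Nat.unpair n).2 := Primrec.snd.comp Primrec.unpair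
    have hx (g : ℕ → ℕ) (hg : Primrec g) : PrimrecPred fun p : ℕ × ℕ => p.1 = g p.2 :=
      Primrec.eq.comp Primrec.fst (hg.comp Primrec.snd)
    exact ((hx _ hl).or ((hx _ (hl.comp hr)).or (hx _ (hr.comp hr)))).computablePred.to_re

def addNew (acc : List ℕ) (x : ℕ) : List ℕ := if x ∈ acc then acc else acc ++ [x]

def firstOccs (l : List ℕ) : List ℕ := l.foldl addNew []

section addNew

variable {acc l : List ℕ}

lemma prefix_foldl_addNew : acc <+: l.foldl addNew acc := by
  induction l generalizing acc with
  | nil => exact List.prefix_refl _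
  | cons a l ih =>
    refine List.IsPrefix.trans ?_ ih
    unfold addNew
    split
    · exact List.prefix_refl _
    · exact List.prefix_append _ _

lemma mem_foldl_addNew {x : ℕ} : x ∈ l.foldl addNew acc ↔ x ∈ acc ∨ x ∈ l := by
  induction l generalizing acc with
  | nil => simp
  | cons a l ih =>
    rw [List.foldl_cons, ih, addNew]
    split <;> aesop

lemma nodup_foldl_addNew (h : acc.Nodup) : (l.foldl addNew acc).Nodup := by
  induction l generalizing acc with
  | nil => exact h
  | cons a l ih =>
    refine ih ?_
    unfold addNew
    split
    · exact h
    · exact h.append (List.nodup_singleton a) (by simpa)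

lemma foldl_addNew_of_subset (h : ∀ x ∈ l, x ∈ acc) : l.foldl addNew acc = acc := by
  induction l with
  | nil => rfl
  | cons a l ih =>
    rw [List.foldl_cons, addNew, if_pos (h a List.mem_cons_self)]
    exact ih fun x hx => h x (List.mem_cons_of_mem a hx)

end addNew

lemma mem_firstOccs {l : List ℕ} {x : ℕ} : x ∈ firstOccs l ↔ x ∈ l := by
  simp [firstOccs, mem_foldl_addNew]

lemma nodup_firstOccs (l : List ℕ) : (firstOccs l).Nodup :=
  nodup_foldl_addNew List.nodup_nil

lemma firstOccs_prefix_of_prefix {l₁ l₂ : List ℕ} (h : l₁ <+: l₂) :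
    firstOccs l₁ <+: firstOccs l₂ := by
  obtain ⟨r, rfl⟩ := h
  rw [firstOccs, firstOccs, List.foldl_append]
  exact prefix_foldl_addNew

lemma firstOccs_append_of_subset {l₁ l₂ : List ℕ} (h : ∀ x ∈ l₂, x ∈ l₁) :
    firstOccs (l₁ ++ l₂) = firstOccs l₁ := by
  rw [firstOccs, List.foldl_append]
  exact foldl_addNew_of_subset fun x hx => mem_firstOccs.2 (h x hx)

lemma primrec_firstOccs : Primrec firstOccs := by
  have hmem : PrimrecPred fun p : List ℕ × ℕ => p.2 ∈ p.1 :=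
    ((PrimrecRel.exists_mem_list Primrec.eq).comp Primrec.fst Primrec.snd).of_eq fun p => by simp
  have hadd : Primrec₂ addNew :=
    (Primrec.ite hmem Primrec.fst (Primrec.list_concat.comp Primrec.fst Primrec.snd)).to₂
  exact Primrec.list_foldl .id (Primrec.const [])
    (hadd.comp (Primrec.fst.comp Primrec.snd) (Primrec.snd.comp Primrec.snd)).to₂

def firstOccsTeacher : Teacher where
  t := firstOccs
  computable := primrec_firstOccs.to_comp
  mono _ _ h := firstOccs_prefix_of_prefix h
  content_sub _ _ hx := mem_firstOccs.1 hx

/-- Each entry of `σ` is at most `σ.sum`, which bounds `padCode σ` and is monotone along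
prefixes. -/
def padCodeMachine : Machine where
  eval σ := Part.some (padCode σ)
  partrec := primrec_padCode.to_comp
  time σ := Part.some (σ.length + (σ.sum + 1) ^ 4)
  time_dom _ := by simp
  length_le_time σ t ht := by
    rw [Part.mem_some_iff.1 ht]
    omega
  size_le_time σ t h ht hh := by
    rw [Part.mem_some_iff.1 ht, Part.mem_some_iff.1 hh]
    have := padCode_lt fun x hx => List.le_sum_of_mem (xs := σ) hx
    have := Nat.size_le.2 (Nat.lt_two_pow_self (n := padCode σ))
    omega
  time_mono σ τ s t h hs ht := by
    rw [Part.mem_some_iff.1 hs, Part.mem_some_iff.1 ht]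
    have := h.length_le
    have : σ.sum ≤ τ.sum := h.sublist.sum_le_sum fun _ _ => Nat.zero_le _
    have := Nat.pow_le_pow_left (Nat.add_le_add_right this 1) 4
    omega

lemma prtt_of_tripleSet {𝓗 : IndexedFamily} (hF : ∀ n, 𝓗.F n = tripleSet n) : PRTT 𝓗 := by
  refine ⟨padCodeMachine, firstOccsTeacher, (.C 3 * .X + 1) ^ 4 + .C 4, fun A hA f hf => ?_⟩
  set m := 𝓗.mi A
  have hAm : A = tripleSet m := hF m ▸ (IndexedFamily.F_mi hA).symm
  obtain ⟨n, hn⟩ := hf.exists_subset_str (hAm ▸ tripleSet_finite m)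
  set d := firstOccs (str f n)
  have hd : ∀ x, x ∈ d ↔ x ∈ tripleSet m := fun x => by
    refine mem_firstOccs.trans ⟨fun hx => ?_, fun hx => hn x (hAm ▸ hx)⟩
    obtain ⟨i, -, rfl⟩ := mem_str.1 hx
    exact hAm ▸ hf.mem i
  have hstable (k : ℕ) (hk : n ≤ k) : firstOccs (str f k) = d := by
    obtain ⟨k, rfl⟩ := Nat.exists_eq_add_of_le hk
    rw [str_add]
    refine firstOccs_append_of_subset fun x hx => ?_
    obtain ⟨i, -, rfl⟩ := List.mem_map.1 hx
    exact hn _ (hf.mem _)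
  have hlen : d.length ≤ 3 := length_le_three_of_nodup (nodup_firstOccs _) fun x => (hd x).1
  have hsum : d.sum ≤ 3 * m := by
    have := d.sum_le_card_nsmul m fun x hx => le_of_mem_tripleSet ((hd x).1 hx)
    rw [smul_eq_mul] at this
    nlinarith
  refine ⟨padCode d, ?_, n, fun k hk => ?_, _, Part.mem_some _, ?_⟩
  · rw [hF, tripleSet_padCode_of_nodup (nodup_firstOccs _) hd, hAm]
  · exact congrArg (Part.some ∘ padCode) (hstable k hk)
  · have := Nat.pow_le_pow_left (Nat.add_le_add_right hsum 1) 4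
    simp only [Polynomial.eval_add, Polynomial.eval_pow, Polynomial.eval_mul, Polynomial.eval_C,
      Polynomial.eval_X, Polynomial.eval_one]
    show d.length + (d.sum + 1) ^ 4 < (3 * m + 1) ^ 4 + 4
    omega

def positives (ans : List Bool) : List ℕ := (List.range ans.length).filter (ans.getD · false)

/-- Query `0, 1, …, |σ|` in turn, then halt with the code of the positively answered ones. -/
def queryStep (x : List ℕ × List Bool) : ℕ :=
  if x.2.length ≤ x.1.length then 2 * x.2.length else 2 * padCode (positives x.2) + 1

lemma primrec_queryStep : Primrec queryStep := by
  have hpos : Primrec positives :=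
    (PrimrecRel.listFilter (R := fun q (ans : List Bool) => ans.getD q false = true)
      (Primrec.eq.comp (Primrec.list_getD false |>.comp Primrec.snd Primrec.fst)
        (Primrec.const true))).comp (Primrec.list_range.comp Primrec.list_length) .id
      |>.of_eq fun _ => by simp [positives]
  exact Primrec.ite (Primrec.nat_le.comp (Primrec.list_length.comp Primrec.snd)
      (Primrec.list_length.comp Primrec.fst))
    (Primrec.nat_mul.comp (Primrec.const 2) (Primrec.list_length.comp Primrec.snd))
    (Primrec.succ.comp (Primrec.nat_mul.comp (Primrec.const 2)
      (primrec_padCode.comp (hpos.comp Primrec.snd))))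

lemma queryStep_lt (x : List ℕ × List Bool) : queryStep x < 2 * (x.2.length + 1) ^ 4 := by
  have hpow : x.2.length + 1 ≤ (x.2.length + 1) ^ 4 := Nat.le_self_pow (by norm_num) _
  unfold queryStep
  split
  · omega
  · have := padCode_lt (l := positives x.2) (m := x.2.length) fun q hq => by
      simp only [positives, List.mem_filter, List.mem_range] at hq
      omega
    omega

def queryMachine : OMachine where
  step x := Part.some (queryStep x)
  partrec := primrec_queryStep.to_comp
  time x := Part.some (x.1.length + 2 * (x.2.length + 1) ^ 4)
  time_dom _ := by simp
  length_le_time x t ht := by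
    rw [Part.mem_some_iff.1 ht]
    omega
  queries_le_time x t ht := by
    rw [Part.mem_some_iff.1 ht]
    have : x.2.length + 1 ≤ (x.2.length + 1) ^ 4 := Nat.le_self_pow (by norm_num) _
    omega
  size_le_time x t v ht hv := by
    rw [Part.mem_some_iff.1 ht, Part.mem_some_iff.1 hv]
    have := queryStep_lt x
    have := Nat.size_le.2 (Nat.lt_two_pow_self (n := queryStep x))
    omega
  time_mono σ τ a b s t hστ hab hs ht := by
    rw [Part.mem_some_iff.1 hs, Part.mem_some_iff.1 ht]
    dsimp only
    have := hστ.length_le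
    have := Nat.pow_le_pow_left (Nat.add_le_add_right hab.length_le 1) 4
    omega

noncomputable def answers (A : Set ℕ) (k : ℕ) : List Bool :=
  (List.range k).map fun q => decide (q ∈ A)

lemma length_answers (A : Set ℕ) (k : ℕ) : (answers A k).length = k := by simp [answers]

lemma reach_answers (A : Set ℕ) (σ : List ℕ) {k : ℕ} (hk : k ≤ σ.length + 1) :
    queryMachine.Reach A σ (answers A k) := by
  induction k with
  | zero => exact .nil
  | succ k ih =>
    rw [answers, List.range_succ, List.map_append]
    refine .query (ih (by omega)) (Part.mem_some_iff.2 ?_)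
    simp [queryStep, show k ≤ σ.length by omega]

lemma positives_answers (A : Set ℕ) (k : ℕ) :
    positives (answers A k) = (List.range k).filter fun q => decide (q ∈ A) := by
  rw [positives, length_answers]
  refine List.filter_congr fun q hq => ?_
  rw [List.mem_range] at hq
  simp [answers, List.getD_eq_getElem?_getD, hq]

lemma range_filter_eq_of_le {p : ℕ → Bool} {m k : ℕ} (hp : ∀ q, p q → q ≤ m) (hk : m < k) :
    (List.range k).filter p = (List.range (m + 1)).filter p := by
  obtain ⟨j, rfl⟩ := Nat.exists_eq_add_of_lt hk
  have htail : ((List.range j).map (m + 1 + ·)).filter p = [] := by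
    refine List.filter_eq_nil_iff.2 ?_
    simp only [List.mem_map, List.mem_range]
    rintro _ ⟨i, -, rfl⟩ hi
    have := hp _ hi
    omega
  rw [show m + j + 1 = (m + 1) + j by omega, List.range_add, List.filter_append, htail,
    List.append_nil]

lemma queryMachine_out {A : Set ℕ} {m : ℕ} (hA : ∀ x ∈ A, x ≤ m) {σ : List ℕ}
    (hσ : m ≤ σ.length) :
    queryMachine.Out A σ (padCode ((List.range (m + 1)).filter fun q => decide (q ∈ A)))
      (answers A (σ.length + 1)) := by
  refine ⟨reach_answers A σ le_rfl, Part.mem_some_iff.2 ?_⟩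
  rw [queryStep, if_neg (by simp [length_answers]), positives_answers,
    range_filter_eq_of_le (k := σ.length + 1) (fun q hq => hA q (of_decide_eq_true hq)) (by omega)]

lemma prto_of_tripleSet {𝓗 : IndexedFamily} (hF : ∀ n, 𝓗.F n = tripleSet n) : PRTO 𝓗 := by
  refine ⟨queryMachine, .X + .C 2 * (.X + .C 2) ^ 4 + 1, fun A hA f hf => ?_⟩
  set m := 𝓗.mi A
  have hAm : A = tripleSet m := hF m ▸ (IndexedFamily.F_mi hA).symm
  have hle : ∀ x ∈ A, x ≤ m := fun x hx => le_of_mem_tripleSet (hAm ▸ hx)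
  set l := (List.range (m + 1)).filter fun q => decide (q ∈ A)
  have hl : ∀ x, x ∈ l ↔ x ∈ tripleSet m := fun x => by
    simp only [l, List.mem_filter, List.mem_range, decide_eq_true_eq, ← hAm]
    exact ⟨And.right, fun hx => ⟨Nat.lt_succ_of_le (hle x hx), hx⟩⟩
  have hout (k : ℕ) (hk : m ≤ k) := queryMachine_out hle (σ := str f k) (by rwa [str_length])
  refine ⟨padCode l, ?_, m, fun k hk => ⟨_, hout k hk⟩, _, _, hout m le_rfl, Part.mem_some _, ?_⟩
  · rw [hF, tripleSet_padCode_of_nodup (List.nodup_range.filter _) hl, hAm]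
  · simp only [str_length, length_answers, Polynomial.eval_add, Polynomial.eval_mul,
      Polynomial.eval_pow, Polynomial.eval_X, Polynomial.eval_C, Polynomial.eval_one]
    exact Nat.lt_add_one _

lemma not_prt_of_tripleSet {𝓗 : IndexedFamily} (hF : ∀ n, 𝓗.F n = tripleSet n) : ¬ PRT 𝓗 := by
  refine not_prt_of_ssubset (A := {0}) (B := {0, 1}) ⟨0, ?_⟩ ⟨padCode [0, 1], ?_⟩ ?_
  · simp [hF, tripleSet]
  · rw [hF, tripleSet_padCode (by simp) (by simp)]
    simp [Set.insert_def]
  · simp [Set.ssubset_def]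

/-- `PRT ⊊ PRT[O] ⊆ PRT[T,O]` and `PRT ⊊ PRT[T] ⊆ PRT[T,O]`;
in particular the family `𝓗₂` of all three-element multisets (under the fixed
triple coding) is PRT[O]- and PRT[T]-learnable but not PRT-learnable. -/
theorem stmt1 :
    ((∀ 𝓕 : IndexedFamily, PRT 𝓕 → PRTO 𝓕) ∧ (∃ 𝓕 : IndexedFamily, PRTO 𝓕 ∧ ¬ PRT 𝓕) ∧
      (∀ 𝓕 : IndexedFamily, PRTO 𝓕 → PRTTO 𝓕)) ∧
    ((∀ 𝓕 : IndexedFamily, PRT 𝓕 → PRTT 𝓕) ∧ (∃ 𝓕 : IndexedFamily, PRTT 𝓕 ∧ ¬ PRT 𝓕) ∧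
      (∀ 𝓕 : IndexedFamily, PRTT 𝓕 → PRTTO 𝓕)) ∧
    (∀ 𝓗 : IndexedFamily, (∀ n, 𝓗.F n = tripleSet n) →
      PRTO 𝓗 ∧ PRTT 𝓗 ∧ ¬ PRT 𝓗) := by
  have triple (𝓗 : IndexedFamily) (hF : ∀ n, 𝓗.F n = tripleSet n) :
      PRTO 𝓗 ∧ PRTT 𝓗 ∧ ¬ PRT 𝓗 :=
    ⟨prto_of_tripleSet hF, prtt_of_tripleSet hF, not_prt_of_tripleSet hF⟩
  obtain ⟨hO, hT, hnot⟩ := triple tripleFamily fun _ => rfl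
  exact ⟨⟨fun _ => prto_of_prt, ⟨_, hO, hnot⟩, fun _ => prtto_of_prto⟩,
    ⟨fun _ => prtt_of_prt, ⟨_, hT, hnot⟩, fun _ => prtto_of_prtt⟩, triple⟩

end TeachLearn
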